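/- Let G be a finite directed multigraph with no intersecting cycles in which every vertex has at least one outgoing edge, let A be its adjacency matrix with norm ‖A‖ = ∑_{a,b} |A_{ab}|, and let D be the largest k ∈ ℕ for which there exist pairwise vertex-disjoint simple cycles C₀, C₁, …, C_k with C₀ ≥ C₁ ≥ ⋯ ≥ C_k. Then there exist constants 0 < c₁ ≤ c₂ and N ∈ ℕ such that c₁·n^D ≤ ‖Aⁿ‖ ≤ c₂·n^D for all n ≥ N. -/

import Mathlib

open Filter Topology

variable {V E : Type*}

/-- A nonempty list of edges forms a directed path:
the target of each edge is the source of the next. -/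
def IsDiPath (src tgt : E → V) (l : List E) : Prop :=
  l ≠ [] ∧ l.Chain' (fun e f => tgt e = src f)

/-- The path `l` starts at the vertex `v` (the source of its first edge is `v`). -/
def StartsAt (src : E → V) (l : List E) (v : V) : Prop :=
  l.head?.map src = some v

/-- The path `l` ends at the vertex `w` (the target of its last edge is `w`). -/
def EndsAt (tgt : E → V) (l : List E) (w : V) : Prop :=
  l.getLast?.map tgt = some w

/-- `l` is a closed path: a path such that the target of the last edge
equals the source of the first edge. -/
def IsClosedDiPath (src tgt : E → V) (l : List E) : Prop :=
  IsDiPath src tgt l ∧ ∃ v : V, StartsAt src l v ∧ EndsAt tgt l v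

/-- `l` is a simple cycle: a closed path whose edge sources are pairwise distinct. -/
def IsSimpleCycle (src tgt : E → V) (l : List E) : Prop :=
  IsClosedDiPath src tgt l ∧ (l.map src).Nodup

/-- The vertex `v` lies on the cycle `l`, i.e. it is the source of one of its edges. -/
def OnCycle (src : E → V) (l : List E) (v : V) : Prop :=
  v ∈ l.map src

/-- Two simple cycles are distinct if neither is a cyclic rotation of the other;
the graph has no intersecting cycles if any two distinct simple cycles are
vertex-disjoint. -/
def NoIntersectingCycles (src tgt : E → V) : Prop :=
  ∀ l l' : List E, IsSimpleCycle src tgt l → IsSimpleCycle src tgt l' →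
    ¬ l.IsRotated l' → ∀ v : V, ¬ (OnCycle src l v ∧ OnCycle src l' v)

/-- `v ≥ w`: either `v = w` or there is a directed path from `v` to `w`. -/
def Reaches (src tgt : E → V) (v w : V) : Prop :=
  v = w ∨ ∃ l : List E, IsDiPath src tgt l ∧ StartsAt src l v ∧ EndsAt tgt l w

/-- `v` and `w` are mutually reachable. -/
def MutReach (src tgt : E → V) (v w : V) : Prop :=
  Reaches src tgt v w ∧ Reaches src tgt w v

/-- The number of directed paths of length `n` in the graph starting at `v`. -/
noncomputable def pathCount (src tgt : E → V) (v : V) (n : ℕ) : ℕ :=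
  Nat.card {l : List E // l.length = n ∧ IsDiPath src tgt l ∧ StartsAt src l v}

/-- An infinite path in the graph. -/
def IsInfPath (src tgt : E → V) (p : ℕ → E) : Prop :=
  ∀ n : ℕ, tgt (p n) = src (p (n + 1))

/-- The vertex `v` is visited infinitely often by the infinite path `p`. -/
def VisitedInfOften (src : E → V) (p : ℕ → E) (v : V) : Prop :=
  ∀ N : ℕ, ∃ n ≥ N, src (p n) = v

/-- `v ≥ C`: the vertex `v` reaches some vertex on the cycle `C`. -/
def ReachesCycle (src tgt : E → V) (v : V) (l : List E) : Prop :=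
  ∃ w : V, OnCycle src l w ∧ Reaches src tgt v w

/-- `C ≥ C'`: some vertex on the cycle `C` reaches the cycle `C'`. -/
def CycleReachesCycle (src tgt : E → V) (l l' : List E) : Prop :=
  ∃ v : V, OnCycle src l v ∧ ReachesCycle src tgt v l'

/-- Two cycles are vertex-disjoint. -/
def CyclesDisjoint (src : E → V) (l l' : List E) : Prop :=
  ∀ v : V, ¬ (OnCycle src l v ∧ OnCycle src l' v)

/-- The vertex `v` lies on two distinct simple cycles. -/
def OnTwoCycles (src tgt : E → V) (v : V) : Prop :=
  ∃ l l' : List E, IsSimpleCycle src tgt l ∧ IsSimpleCycle src tgt l' ∧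
    ¬ l.IsRotated l' ∧ OnCycle src l v ∧ OnCycle src l' v

/-- The adjacency matrix of the graph, as a real matrix: the `(a, b)` entry is the
number of edges from `a` to `b`. -/
noncomputable def adjMatrix (src tgt : E → V) : Matrix V V ℝ :=
  Matrix.of fun a b => (Nat.card {e : E // src e = a ∧ tgt e = b} : ℝ)

/-!
`∑ a b, |(A ^ n) a b|` counts the walks of length `n`. Call an edge a cycle edge if it lies on a
simple cycle. As cycles do not intersect, a cycle edge is determined by its source, so a walk is
determined by its start and its skeleton: the sequence of its non-cycle edges, interrupted by the
lengths of the runs of cycle edges. A non-cycle edge occurs at most once in a walk, since a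
repetition would close a cycle through it. Two distinct nonempty runs are separated by a non-cycle
edge, so they lie on disjoint cycles, the earlier reaching the later: at most `D + 1` runs are
nonempty, and since their total length is `n` minus the number of non-cycle edges, the first `D` of
them fix the last one. This leaves `O(n ^ D)` walks. Conversely, along a chain `C₀ ≥ ⋯ ≥ C_D` a walk
can go `aᵢ` times around `Cᵢ` before moving on to `Cᵢ₊₁`, for any `a₀, …, a_{D-1} ≤ M` with `M`
proportional to `n`, and then finish on `C_D`; counting the edges on each `Cᵢ` recovers the `aᵢ`, so
this gives `(M + 1) ^ D` distinct walks of length `n`.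
-/

namespace List

variable {α β : Type*}

theorem exists_eq_append_of_not_nodup_filterMap {f : α → Option β} :
    ∀ {l : List α}, ¬ (l.filterMap f).Nodup →
      ∃ l₁ a l₂ b l₃ c, l = l₁ ++ a :: (l₂ ++ b :: l₃) ∧ f a = some c ∧ f b = some c
  | [], h => absurd nodup_nil h
  | x :: l, h => by
    rw [filterMap_cons] at h
    rcases hx : f x with _ | c
    · obtain ⟨l₁, a, l₂, b, l₃, c, rfl, hac, hbc⟩ :=
        exists_eq_append_of_not_nodup_filterMap (by simpa [hx] using h)
      exact ⟨x :: l₁, a, l₂, b, l₃, c, rfl, hac, hbc⟩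
    · simp only [hx, nodup_cons, not_and_or, not_not] at h
      rcases h with h | h
      · obtain ⟨y, hy, hyc⟩ := mem_filterMap.1 h
        obtain ⟨l₂, l₃, rfl⟩ := append_of_mem hy
        exact ⟨[], x, l₂, y, l₃, c, rfl, hx, hyc⟩
      · obtain ⟨l₁, a, l₂, b, l₃, c, rfl, hac, hbc⟩ :=
          exists_eq_append_of_not_nodup_filterMap h
        exact ⟨x :: l₁, a, l₂, b, l₃, c, rfl, hac, hbc⟩

theorem exists_eq_append_of_not_nodup_map {f : α → β} {l : List α} (h : ¬ (l.map f).Nodup) :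
    ∃ l₁ a l₂ b l₃, l = l₁ ++ a :: (l₂ ++ b :: l₃) ∧ f a = f b := by
  rw [← filterMap_eq_map] at h
  obtain ⟨l₁, a, l₂, b, l₃, c, rfl, hac, hbc⟩ := exists_eq_append_of_not_nodup_filterMap h
  exact ⟨l₁, a, l₂, b, l₃, rfl, Option.some_injective _ (hac.trans hbc.symm)⟩

theorem eq_of_take_eq_of_sum_eq {M : Type*} [AddLeftCancelMonoid M] {r : ℕ} {w w' : List M}
    (hlen : w.length = w'.length) (hr : w.length ≤ r + 1) (htake : w.take r = w'.take r)
    (hsum : w.sum = w'.sum) : w = w' := by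
  have hdrop_len : (w.drop r).length = (w'.drop r).length := by simp [hlen]
  have hdrop_le : (w.drop r).length ≤ 1 := by simp; omega
  have hdrop_sum : (w.drop r).sum = (w'.drop r).sum := by
    rw [← take_append_drop r w, ← take_append_drop r w', sum_append, sum_append, htake] at hsum
    exact add_left_cancel hsum
  have hdrop : w.drop r = w'.drop r := by
    generalize w.drop r = d, w'.drop r = d' at hdrop_len hdrop_le hdrop_sum
    match d, d' with
    | [], [] => rfl
    | [x], [x'] => simpa using hdrop_sum
    | [], _ :: _ | _ :: _, [] | _ :: _ :: _, _ => simp at hdrop_len hdrop_le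
  rw [← take_append_drop r w, ← take_append_drop r w', htake, hdrop]

theorem eq_of_map_ne_zero_eq_of_filter_eq :
    ∀ {u u' : List ℕ}, u.map (fun x => decide (x ≠ 0)) = u'.map (fun x => decide (x ≠ 0)) →
      u.filter (· ≠ 0) = u'.filter (· ≠ 0) → u = u'
  | [], u', hmap, _ => (map_eq_nil_iff.1 hmap.symm).symm
  | _ :: _, [], hmap, _ => by simp at hmap
  | x :: u, x' :: u', hmap, hfilter => by
    simp only [map_cons, cons.injEq] at hmap
    by_cases hx : x = 0
    · have hx' : x' = 0 := by simpa [hx] using hmap.1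
      subst hx hx'
      simp only [filter_cons, ne_eq, not_true_eq_false, decide_false] at hfilter
      rw [eq_of_map_ne_zero_eq_of_filter_eq hmap.2 hfilter]
    · have hx' : x' ≠ 0 := by simpa [hx] using hmap.1
      simp only [filter_cons, ne_eq, hx, hx', not_false_eq_true, decide_true, if_true,
        cons.injEq] at hfilter
      rw [hfilter.1, eq_of_map_ne_zero_eq_of_filter_eq hmap.2 hfilter.2]

theorem sum_filter_ne_zero (u : List ℕ) : (u.filter (· ≠ 0)).sum = u.sum := by
  induction u with
  | nil => rfl
  | cons x u ih => by_cases hx : x = 0 <;> simp_all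

theorem getD_le_sum (w : List ℕ) (i : ℕ) : w.getD i 0 ≤ w.sum := by
  rcases lt_or_ge i w.length with hi | hi
  · rw [getD_eq_getElem _ _ hi]; exact le_sum_of_mem (getElem_mem hi)
  · rw [getD_eq_default _ _ hi]; exact Nat.zero_le _

theorem take_eq_take_of_getD_eq {w w' : List α} {r : ℕ} {d : α} (hlen : w.length = w'.length)
    (h : ∀ i < r, w.getD i d = w'.getD i d) : w.take r = w'.take r := by
  refine ext_getElem (by simp [hlen]) fun i hi hi' => ?_
  simp only [length_take, lt_min_iff] at hi hi'
  have := h i hi.1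
  rwa [getD_eq_getElem _ _ hi.2, getD_eq_getElem _ _ hi'.2, ← getElem_take (j := r),
    ← getElem_take (j := r) (xs := w')] at this

end List

/-- The lengths of the blocks of `none`s in `s`, cut at each `some`; empty blocks are listed. -/
def noneRuns {α : Type*} : List (Option α) → List ℕ
  | [] => [0]
  | none :: s => (noneRuns s).modifyHead (· + 1)
  | some _ :: s => 0 :: noneRuns s

section NoneRuns

variable {α : Type*}

theorem exists_noneRuns_eq_cons : ∀ s : List (Option α), ∃ x r, noneRuns s = x :: r
  | [] | some _ :: _ => ⟨_, _, rfl⟩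
  | none :: s => by
    obtain ⟨x, r, h⟩ := exists_noneRuns_eq_cons s
    exact ⟨x + 1, r, by simp [noneRuns, h]⟩

theorem length_noneRuns :
    ∀ s : List (Option α), (noneRuns s).length = s.reduceOption.length + 1
  | [] => rfl
  | none :: s => by simp [noneRuns, length_noneRuns s]
  | some _ :: s => by simp [noneRuns, length_noneRuns s]

theorem sum_noneRuns_add_length_reduceOption :
    ∀ s : List (Option α), (noneRuns s).sum + s.reduceOption.length = s.length
  | [] => rfl
  | none :: s => by
    have := sum_noneRuns_add_length_reduceOption s
    obtain ⟨x, r, h⟩ := exists_noneRuns_eq_cons s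
    simp only [noneRuns, h, List.modifyHead_cons, List.sum_cons,
      List.reduceOption_cons_of_none, List.length_cons] at this ⊢
    omega
  | some _ :: s => by
    have := sum_noneRuns_add_length_reduceOption s
    simp only [noneRuns, List.sum_cons, List.reduceOption_cons_of_some, List.length_cons]
    omega

theorem countP_noneRuns_none_cons_none_cons (s : List (Option α)) :
    (noneRuns (none :: none :: s)).countP (· ≠ 0) =
      (noneRuns (none :: s)).countP (· ≠ 0) := by
  obtain ⟨x, r, h⟩ := exists_noneRuns_eq_cons s
  simp [noneRuns, h]

theorem countP_noneRuns_none_cons {s : List (Option α)} (hs : ∀ t, s ≠ none :: t) :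
    (noneRuns (none :: s)).countP (· ≠ 0) = (noneRuns s).countP (· ≠ 0) + 1 := by
  obtain ⟨r, h⟩ : ∃ r, noneRuns s = 0 :: r := by
    match s with
    | [] | some _ :: _ => exact ⟨_, rfl⟩
    | none :: t => exact absurd rfl (hs t)
  simp [noneRuns, h]

theorem eq_of_reduceOption_eq_of_noneRuns_eq :
    ∀ {s s' : List (Option α)}, s.reduceOption = s'.reduceOption →
      noneRuns s = noneRuns s' → s = s'
  | [], [], _, _ => rfl
  | some a :: s, some a' :: s', h, h' => by
    simp only [List.reduceOption_cons_of_some, List.cons.injEq, noneRuns, true_and] at h h'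
    rw [h.1, eq_of_reduceOption_eq_of_noneRuns_eq h.2 h']
  | none :: s, none :: s', h, h' => by
    obtain ⟨x, r, hx⟩ := exists_noneRuns_eq_cons s
    obtain ⟨x', r', hx'⟩ := exists_noneRuns_eq_cons s'
    simp only [List.reduceOption_cons_of_none, noneRuns, hx, hx', List.modifyHead_cons,
      List.cons.injEq, add_left_inj] at h h'
    rw [eq_of_reduceOption_eq_of_noneRuns_eq h (by rw [hx, hx', h'.1, h'.2])]
  | [], some _ :: _, h, _ | some _ :: _, [], h, _ => by simp at h
  | [], none :: s, _, h | none :: s, [], _, h | some _ :: _, none :: s, _, h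
  | none :: s, some _ :: _, _, h => by
    obtain ⟨x, r, hx⟩ := exists_noneRuns_eq_cons s
    simp [noneRuns, hx] at h

theorem exists_card_le_of_noneRuns [Finite α] (m r : ℕ) : ∃ K : ℕ, ∀ n : ℕ,
    Nat.card {s : List (Option α) // s.length = n ∧ s.reduceOption.length ≤ m ∧
      (noneRuns s).countP (· ≠ 0) ≤ r + 1} ≤ K * (n + 1) ^ r := by
  have : Finite {l : List α // l.length ≤ m} := (List.finite_length_le α m).to_subtype
  have : Finite {b : List Bool // b.length ≤ m + 1} :=
    (List.finite_length_le Bool (m + 1)).to_subtype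
  refine ⟨Nat.card {l : List α // l.length ≤ m} * Nat.card {b : List Bool // b.length ≤ m + 1},
    fun n => ?_⟩
  -- only the first `r` nonzero blocks are recorded: the total length fixes the last one
  let code : {s : List (Option α) // s.length = n ∧ s.reduceOption.length ≤ m ∧
      (noneRuns s).countP (· ≠ 0) ≤ r + 1} →
      {l : List α // l.length ≤ m} × {b : List Bool // b.length ≤ m + 1} ×
        (Fin r → Fin (n + 1)) :=
    fun s => (⟨s.1.reduceOption, s.2.2.1⟩,
      ⟨(noneRuns s.1).map (· ≠ 0), by simpa [length_noneRuns] using s.2.2.1⟩,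
      fun i => ⟨((noneRuns s.1).filter (· ≠ 0)).getD i 0, Nat.lt_succ_of_le <| by
        have := sum_noneRuns_add_length_reduceOption s.1
        have := List.getD_le_sum ((noneRuns s.1).filter (· ≠ 0)) i
        rw [List.sum_filter_ne_zero] at this
        omega⟩)
  have hcode : Function.Injective code := by
    rintro ⟨s, _, _, hs_runs⟩ ⟨s', _, _, _⟩ h
    simp only [code, Prod.mk.injEq, Subtype.mk.injEq, funext_iff, Fin.ext_iff] at h
    obtain ⟨hred, hmap, hvals⟩ := h
    have hlen : ((noneRuns s).filter (· ≠ 0)).length =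
        ((noneRuns s').filter (· ≠ 0)).length := by
      simpa [List.filter_map] using congrArg (fun b => (b.filter id).length) hmap
    have hsum : ((noneRuns s).filter (· ≠ 0)).sum = ((noneRuns s').filter (· ≠ 0)).sum := by
      have := sum_noneRuns_add_length_reduceOption s
      have := sum_noneRuns_add_length_reduceOption s'
      have := congrArg List.length hred
      simp only [List.sum_filter_ne_zero]
      omega
    have hfilter := List.eq_of_take_eq_of_sum_eq hlen
      (by rwa [← List.countP_eq_length_filter]) (List.take_eq_take_of_getD_eq hlen
        fun i hi => hvals ⟨i, hi⟩) hsum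
    exact Subtype.ext (eq_of_reduceOption_eq_of_noneRuns_eq hred
      (List.eq_of_map_ne_zero_eq_of_filter_eq hmap hfilter))
  calc _ ≤ _ := Nat.card_le_card_of_injective code hcode
    _ = _ := by simp [Nat.card_prod, mul_assoc]

end NoneRuns

def IsWalk (src tgt : E → V) : V → List E → V → Prop
  | u, [], v => u = v
  | u, e :: l, v => src e = u ∧ IsWalk src tgt (tgt e) l v

section Walks

variable {src tgt : E → V} {u v w x y : V} {l l₁ l₂ : List E}

@[simp]
theorem isWalk_nil : IsWalk src tgt u [] v ↔ u = v := Iff.rfl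

@[simp]
theorem isWalk_cons {e : E} :
    IsWalk src tgt u (e :: l) v ↔ src e = u ∧ IsWalk src tgt (tgt e) l v :=
  Iff.rfl

theorem isWalk_append :
    IsWalk src tgt u (l₁ ++ l₂) w ↔ ∃ v, IsWalk src tgt u l₁ v ∧ IsWalk src tgt v l₂ w := by
  induction l₁ generalizing u with
  | nil => simp
  | cons e l₁ ih => simp [ih, and_assoc]

theorem IsWalk.append (h₁ : IsWalk src tgt u l₁ v) (h₂ : IsWalk src tgt v l₂ w) :
    IsWalk src tgt u (l₁ ++ l₂) w :=
  isWalk_append.2 ⟨v, h₁, h₂⟩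

theorem IsWalk.right_unique (h : IsWalk src tgt u l v) (h' : IsWalk src tgt u l w) : v = w := by
  induction l generalizing u with
  | nil => exact h.symm.trans h'
  | cons e l ih => exact ih h.2 h'.2

theorem isWalk_iff_isDiPath (hl : l ≠ []) :
    IsWalk src tgt u l v ↔ IsDiPath src tgt l ∧ StartsAt src l u ∧ EndsAt tgt l v := by
  induction l generalizing u with
  | nil => exact absurd rfl hl
  | cons e l ih =>
    cases l with
    | nil =>
      simp only [isWalk_cons, isWalk_nil, IsDiPath, StartsAt, EndsAt, List.head?_cons,
        List.getLast?_singleton, Option.map_some, Option.some.injEq]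
      exact ⟨fun h => ⟨⟨List.cons_ne_nil e [], List.isChain_singleton e⟩, h⟩, fun h => h.2⟩
    | cons f l =>
      rw [isWalk_cons, ih (List.cons_ne_nil f l)]
      simp only [IsDiPath, StartsAt, EndsAt, List.head?_cons, List.getLast?_cons_cons,
        Option.map_some, Option.some.injEq, ne_eq, reduceCtorEq, not_false_eq_true, true_and]
      constructor
      · rintro ⟨he, hc, hf, hv⟩
        exact ⟨List.isChain_cons_cons.2 ⟨hf.symm, hc⟩, he, hv⟩
      · rintro ⟨hc, he, hv⟩
        exact ⟨he, (List.isChain_cons_cons.1 hc).2, (List.isChain_cons_cons.1 hc).1.symm, hv⟩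

theorem reaches_iff_exists_isWalk : Reaches src tgt u v ↔ ∃ l, IsWalk src tgt u l v := by
  constructor
  · rintro (rfl | ⟨l, hl, hu, hv⟩)
    · exact ⟨[], rfl⟩
    · exact ⟨l, (isWalk_iff_isDiPath hl.1).2 ⟨hl, hu, hv⟩⟩
  · rintro ⟨_ | ⟨e, l⟩, hl⟩
    · exact Or.inl hl
    · exact Or.inr ⟨_, (isWalk_iff_isDiPath (List.cons_ne_nil e l)).1 hl⟩

theorem isSimpleCycle_iff {C : List E} :
    IsSimpleCycle src tgt C ↔ C ≠ [] ∧ (∃ v, IsWalk src tgt v C v) ∧ (C.map src).Nodup := by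
  constructor
  · rintro ⟨⟨hC, v, hu, hv⟩, hnd⟩
    exact ⟨hC.1, ⟨v, (isWalk_iff_isDiPath hC.1).2 ⟨hC, hu, hv⟩⟩, hnd⟩
  · rintro ⟨hne, ⟨v, hv⟩, hnd⟩
    obtain ⟨hC, hu, hv⟩ := (isWalk_iff_isDiPath hne).1 hv
    exact ⟨⟨hC, v, hu, hv⟩, hnd⟩

theorem IsWalk.exists_split (h : IsWalk src tgt u l w) (hx : x ∈ l.map src) :
    ∃ l₁ l₂, l = l₁ ++ l₂ ∧ IsWalk src tgt u l₁ x ∧ IsWalk src tgt x l₂ w := by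
  obtain ⟨e, he, rfl⟩ := List.mem_map.1 hx
  obtain ⟨l₁, l₂, rfl⟩ := List.append_of_mem he
  obtain ⟨y, h₁, rfl, h₂⟩ := isWalk_append.1 h
  exact ⟨l₁, e :: l₂, rfl, h₁, rfl, h₂⟩

theorem IsWalk.exists_isWalk_of_mem (h : IsWalk src tgt v l v) (hx : x ∈ l.map src)
    (hy : y ∈ l.map src) : ∃ p, IsWalk src tgt x p y := by
  obtain ⟨-, l₂, -, -, hxv⟩ := h.exists_split hx
  obtain ⟨l₁, -, -, hvy, -⟩ := h.exists_split hy
  exact ⟨l₂ ++ l₁, hxv.append hvy⟩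

theorem IsWalk.flatten_replicate (h : IsWalk src tgt v l v) (k : ℕ) :
    IsWalk src tgt v (List.replicate k l).flatten v := by
  induction k with
  | zero => rfl
  | succ k ih => exact h.append ih

theorem IsWalk.exists_take (h : IsWalk src tgt u l w) (k : ℕ) :
    ∃ v, IsWalk src tgt u (l.take k) v := by
  rw [← List.take_append_drop k l] at h
  obtain ⟨v, hv, -⟩ := isWalk_append.1 h
  exact ⟨v, hv⟩

theorem IsWalk.exists_length_eq (h : IsWalk src tgt v l v) (hl : l ≠ []) (k : ℕ) :
    ∃ p w, p.length = k ∧ IsWalk src tgt v p w ∧ ∀ e ∈ p, e ∈ l := by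
  obtain ⟨w, hw⟩ := (h.flatten_replicate k).exists_take k
  refine ⟨_, w, ?_, hw, fun e he => ?_⟩
  · simp only [List.length_take, List.length_flatten, List.map_replicate, List.sum_replicate,
      smul_eq_mul]
    exact min_eq_left (Nat.le_mul_of_pos_right k (List.length_pos_iff.2 hl))
  · obtain ⟨l', hl', he⟩ := List.mem_flatten.1 (List.mem_of_mem_take he)
    exact List.eq_of_mem_replicate hl' ▸ he

theorem isWalk_flatten_ofFn : ∀ {D : ℕ} {u : Fin (D + 1) → V} {g : Fin D → List E},
    (∀ i, IsWalk src tgt (u i.castSucc) (g i) (u i.succ)) →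
      IsWalk src tgt (u 0) (List.ofFn g).flatten (u (Fin.last D))
  | 0, _, _, _ => rfl
  | D + 1, u, g, h => by
    rw [List.ofFn_succ, List.flatten_cons, ← Fin.succ_last]
    exact (h 0).append (isWalk_flatten_ofFn (u := fun i => u i.succ) fun i => h i.succ)

end Walks

def IsCycleEdge (src tgt : E → V) (e : E) : Prop :=
  ∃ C, IsSimpleCycle src tgt C ∧ e ∈ C

def IsDisjointCycleChain (src tgt : E → V) {k : ℕ} (C : Fin (k + 1) → List E) : Prop :=
  (∀ i, IsSimpleCycle src tgt (C i)) ∧ (∀ i j, i ≠ j → CyclesDisjoint src (C i) (C j)) ∧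
    ∀ i : Fin k, CycleReachesCycle src tgt (C i.castSucc) (C i.succ)

section Cycles

variable {src tgt : E → V} {v v' x y : V} {l p C C' : List E} {e f : E} {D : ℕ}

theorem IsSimpleCycle.exists_isWalk (h : IsSimpleCycle src tgt C) :
    ∃ v ∈ C.map src, IsWalk src tgt v C v := by
  obtain ⟨hne, ⟨v, hv⟩, -⟩ := isSimpleCycle_iff.1 h
  obtain ⟨e, C, rfl⟩ := List.exists_cons_of_ne_nil hne
  exact ⟨v, hv.1 ▸ List.mem_map_of_mem List.mem_cons_self, hv⟩

/-- Split the closed walk at a repeated vertex into two shorter closed walks. -/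
theorem IsWalk.isCycleEdge_of_mem (h : IsWalk src tgt v l v) (he : e ∈ l) :
    IsCycleEdge src tgt e := by
  induction hn : l.length using Nat.strong_induction_on generalizing v l with
  | _ n ih =>
  by_cases hnd : (l.map src).Nodup
  · exact ⟨l, isSimpleCycle_iff.2 ⟨List.ne_nil_of_mem he, ⟨v, h⟩, hnd⟩, he⟩
  obtain ⟨l₁, a, l₂, b, l₃, rfl, hab⟩ := List.exists_eq_append_of_not_nodup_map hnd
  obtain ⟨x, h₁, hax, h₂⟩ := isWalk_append.1 h
  obtain ⟨y, h₃, hby, h₄⟩ := isWalk_append.1 h₂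
  have hloop : IsWalk src tgt (src a) (a :: l₂) (src a) := ⟨rfl, by rwa [hab, hby]⟩
  have hrest : IsWalk src tgt v (l₁ ++ b :: l₃) v := h₁.append ⟨hab.symm.trans hax, h₄⟩
  simp only [List.mem_append, List.mem_cons] at he
  simp only [List.length_append, List.length_cons] at hn
  rcases he with he | rfl | he | rfl | he
  · exact ih _ (by simp; omega) hrest (by simp [he]) rfl
  · exact ih _ (by simp; omega) hloop List.mem_cons_self rfl
  · exact ih _ (by simp; omega) hloop (List.mem_cons_of_mem _ he) rfl
  · exact ih _ (by simp; omega) hrest (by simp) rfl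
  · exact ih _ (by simp; omega) hrest (by simp [he]) rfl

theorem NoIntersectingCycles.isRotated (hG : NoIntersectingCycles src tgt)
    (hC : IsSimpleCycle src tgt C) (hC' : IsSimpleCycle src tgt C') (hx : x ∈ C.map src)
    (hx' : x ∈ C'.map src) : C.IsRotated C' := by
  by_contra hrot
  exact hG C C' hC hC' hrot x ⟨hx, hx'⟩

theorem IsCycleEdge.eq_of_src_eq (hG : NoIntersectingCycles src tgt)
    (he : IsCycleEdge src tgt e) (hf : IsCycleEdge src tgt f) (hef : src e = src f) : e = f := by
  obtain ⟨C, hC, heC⟩ := he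
  obtain ⟨C', hC', hfC'⟩ := hf
  have hrot := hG.isRotated hC hC' (List.mem_map_of_mem heC) (hef ▸ List.mem_map_of_mem hfC')
  exact List.inj_on_of_nodup_map hC.2 heC (hrot.mem_iff.2 hfC') hef

/-- If the cycles met they would coincide, and closing `p` along them would put `f` on a cycle. -/
theorem cyclesDisjoint_and_reaches_of_isWalk (hG : NoIntersectingCycles src tgt)
    (hC : IsSimpleCycle src tgt C) (hC' : IsSimpleCycle src tgt C') (hx : x ∈ C.map src)
    (hy : y ∈ C'.map src) (hp : IsWalk src tgt x p y) (hf : f ∈ p)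
    (hnf : ¬ IsCycleEdge src tgt f) :
    CyclesDisjoint src C C' ∧ CycleReachesCycle src tgt C C' := by
  refine ⟨fun z ⟨hz, hz'⟩ => hnf ?_, x, hx, y, hy, reaches_iff_exists_isWalk.2 ⟨p, hp⟩⟩
  have hrot := hG.isRotated hC hC' hz hz'
  obtain ⟨v, -, hv⟩ := hC.exists_isWalk
  obtain ⟨q, hq⟩ := hv.exists_isWalk_of_mem ((hrot.map src).mem_iff.2 hy) hx
  exact (hp.append hq).isCycleEdge_of_mem (List.mem_append_left _ hf)

theorem CycleReachesCycle.exists_isWalk {w w' : V} (h : CycleReachesCycle src tgt C C')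
    (hC : IsWalk src tgt v C v) (hC' : IsWalk src tgt v' C' v') (hw : w ∈ C.map src)
    (hw' : w' ∈ C'.map src) : ∃ p, IsWalk src tgt w p w' := by
  obtain ⟨x, hx, y, hy, hxy⟩ := h
  obtain ⟨p, hp⟩ := reaches_iff_exists_isWalk.1 hxy
  obtain ⟨p₁, hp₁⟩ := hC.exists_isWalk_of_mem hw hx
  obtain ⟨p₂, hp₂⟩ := hC'.exists_isWalk_of_mem hy hw'
  exact ⟨_, (hp₁.append hp).append hp₂⟩

theorem length_le_of_pairwise_cyclesDisjoint
    (hD : D ∈ upperBounds {k | ∃ C : Fin (k + 1) → List E, IsDisjointCycleChain src tgt C})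
    {L : List (List E)} (hL : ∀ C ∈ L, IsSimpleCycle src tgt C)
    (hp : L.Pairwise fun C C' => CyclesDisjoint src C C' ∧ CycleReachesCycle src tgt C C') :
    L.length ≤ D + 1 := by
  rcases L with _ | ⟨C₀, L⟩
  · simp
  rw [List.pairwise_iff_get] at hp
  have hchain : IsDisjointCycleChain src tgt (C₀ :: L).get := by
    refine ⟨fun i => hL _ (List.get_mem _ _), fun i j hij => ?_,
      fun i => (hp _ _ Fin.castSucc_lt_succ).2⟩
    rcases lt_or_gt_of_ne hij with h | h
    · exact (hp i j h).1
    · exact fun z hz => (hp j i h).1 z hz.symm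
  simpa using hD ⟨_, hchain⟩

end Cycles

open Classical in
noncomputable def skeleton (src tgt : E → V) (l : List E) : List (Option E) :=
  l.map fun e => if IsCycleEdge src tgt e then none else some e

abbrev WalkOfLength (src tgt : E → V) (n : ℕ) : Type _ :=
  Σ a b : V, {l : List E // l.length = n ∧ IsWalk src tgt a l b}

instance {n : ℕ} (P : List E → Prop) [Finite E] : Finite {l : List E // l.length = n ∧ P l} :=
  ((List.finite_length_eq E n).subset fun _ h => h.1).to_subtype

section Skeleton

variable {src tgt : E → V} {u v v' : V} {l l' : List E} {e : E} {D : ℕ}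

theorem skeleton_cons_of_isCycleEdge (he : IsCycleEdge src tgt e) :
    skeleton src tgt (e :: l) = none :: skeleton src tgt l := by
  simp [skeleton, he]

theorem skeleton_cons_of_not_isCycleEdge (he : ¬ IsCycleEdge src tgt e) :
    skeleton src tgt (e :: l) = some e :: skeleton src tgt l := by
  simp [skeleton, he]

@[simp]
theorem length_skeleton : (skeleton src tgt l).length = l.length := List.length_map _

/-- Cycle edges are determined by their source, so the skeleton loses nothing. -/
theorem IsWalk.eq_of_skeleton_eq (hG : NoIntersectingCycles src tgt) (h : IsWalk src tgt u l v)
    (h' : IsWalk src tgt u l' v') (hs : skeleton src tgt l = skeleton src tgt l') : l = l' := by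
  induction l generalizing u l' with
  | nil => simpa [eq_comm] using congrArg List.length hs
  | cons e l ih =>
    obtain _ | ⟨e', l'⟩ := l'
    · exact absurd (congrArg List.length hs) (by simp)
    have hee : e = e' := by
      by_cases he : IsCycleEdge src tgt e <;> by_cases he' : IsCycleEdge src tgt e' <;>
        simp [skeleton_cons_of_isCycleEdge, skeleton_cons_of_not_isCycleEdge, he, he'] at hs
      · exact he.eq_of_src_eq hG he' (h.1.trans h'.1.symm)
      · exact hs.1
    subst hee
    rw [ih h.2 h'.2 (List.cons.inj hs).2]

theorem IsWalk.nodup_reduceOption_skeleton (h : IsWalk src tgt u l v) :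
    (skeleton src tgt l).reduceOption.Nodup := by
  by_contra hnd
  rw [skeleton, List.reduceOption, List.filterMap_map] at hnd
  obtain ⟨l₁, a, l₂, b, l₃, c, rfl, ha, hb⟩ :=
    List.exists_eq_append_of_not_nodup_filterMap hnd
  have hna : ¬ IsCycleEdge src tgt a := by intro h; simp [h] at ha
  have hab : a = b := by
    by_cases hb' : IsCycleEdge src tgt b <;> simp_all
  subst hab
  obtain ⟨x, -, hax, h₂⟩ := isWalk_append.1 h
  obtain ⟨y, h₃, hay, -⟩ := isWalk_append.1 h₂
  have hloop : IsWalk src tgt (src a) (a :: l₂) (src a) := ⟨rfl, by rwa [hay]⟩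
  exact hna (hloop.isCycleEdge_of_mem List.mem_cons_self)

/-- One cycle for each nonempty run of cycle edges. -/
theorem IsWalk.exists_cycles_of_noneRuns_skeleton (hG : NoIntersectingCycles src tgt)
    (h : IsWalk src tgt u l v) :
    ∃ L : List (List E), L.length = (noneRuns (skeleton src tgt l)).countP (· ≠ 0) ∧
      (∀ C ∈ L, IsSimpleCycle src tgt C ∧ ∃ g ∈ l, g ∈ C) ∧
      L.Pairwise fun C C' => CyclesDisjoint src C C' ∧ CycleReachesCycle src tgt C C' := by
  induction l generalizing u with
  | nil => exact ⟨[], rfl, by simp, List.Pairwise.nil⟩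
  | cons e l ih =>
    obtain ⟨rfl, hl⟩ := h
    obtain ⟨L, hlen, hmem, hpair⟩ := ih hl
    have hmem' : ∀ C ∈ L, IsSimpleCycle src tgt C ∧ ∃ g ∈ e :: l, g ∈ C := fun C hC =>
      ⟨(hmem C hC).1, (hmem C hC).2.imp fun _ hg => ⟨List.mem_cons_of_mem e hg.1, hg.2⟩⟩
    by_cases he : IsCycleEdge src tgt e
    swap
    · refine ⟨L, ?_, hmem', hpair⟩
      simpa [skeleton_cons_of_not_isCycleEdge he, noneRuns] using hlen
    by_cases hcont : ∃ f l', l = f :: l' ∧ IsCycleEdge src tgt f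
    · obtain ⟨f, l', rfl, hf⟩ := hcont
      refine ⟨L, ?_, hmem', hpair⟩
      rw [skeleton_cons_of_isCycleEdge he, skeleton_cons_of_isCycleEdge hf,
        countP_noneRuns_none_cons_none_cons, ← skeleton_cons_of_isCycleEdge hf, hlen]
    obtain ⟨Ce, hCe, heC⟩ := he
    refine ⟨Ce :: L, ?_, List.forall_mem_cons.2 ⟨⟨hCe, e, List.mem_cons_self, heC⟩, hmem'⟩,
      List.pairwise_cons.2 ⟨fun C hC => ?_, hpair⟩⟩
    · rw [skeleton_cons_of_isCycleEdge ⟨Ce, hCe, heC⟩, countP_noneRuns_none_cons,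
        List.length_cons, hlen]
      rintro t ht
      obtain _ | ⟨f, l'⟩ := l
      · simp [skeleton] at ht
      by_cases hf : IsCycleEdge src tgt f
      · exact hcont ⟨f, l', rfl, hf⟩
      · simp [skeleton_cons_of_not_isCycleEdge hf] at ht
    obtain ⟨hC, g, hg, hgC⟩ := hmem C hC
    obtain ⟨l₁, l₂, rfl⟩ := List.append_of_mem hg
    obtain _ | ⟨f, l₁⟩ := l₁
    · exact absurd ⟨g, l₂, rfl, C, hC, hgC⟩ hcont
    obtain ⟨y, hy, rfl, -⟩ := isWalk_append.1 hl
    exact cyclesDisjoint_and_reaches_of_isWalk hG hCe hC (List.mem_map_of_mem heC)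
      (List.mem_map_of_mem hgC) (p := e :: f :: l₁) ⟨rfl, hy⟩ (by simp)
      fun hf => hcont ⟨f, l₁ ++ g :: l₂, rfl, hf⟩

theorem IsWalk.countP_noneRuns_skeleton_le (hG : NoIntersectingCycles src tgt)
    (hD : D ∈ upperBounds {k | ∃ C : Fin (k + 1) → List E, IsDisjointCycleChain src tgt C})
    (h : IsWalk src tgt u l v) : (noneRuns (skeleton src tgt l)).countP (· ≠ 0) ≤ D + 1 := by
  obtain ⟨L, hlen, hmem, hpair⟩ := h.exists_cycles_of_noneRuns_skeleton hG
  exact hlen ▸ length_le_of_pairwise_cyclesDisjoint hD (fun C hC => (hmem C hC).1) hpair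

theorem exists_card_walkOfLength_le [Fintype V] [Fintype E] (hG : NoIntersectingCycles src tgt)
    (hD : D ∈ upperBounds {k | ∃ C : Fin (k + 1) → List E, IsDisjointCycleChain src tgt C}) :
    ∃ K : ℕ, ∀ n, Nat.card (WalkOfLength src tgt n) ≤ K * (n + 1) ^ D := by
  obtain ⟨K, hK⟩ := exists_card_le_of_noneRuns (α := E) (Fintype.card E) D
  refine ⟨Fintype.card V * K, fun n => ?_⟩
  let code : WalkOfLength src tgt n → V × {s : List (Option E) // s.length = n ∧
      s.reduceOption.length ≤ Fintype.card E ∧ (noneRuns s).countP (· ≠ 0) ≤ D + 1} :=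
    fun w => (w.1, ⟨skeleton src tgt w.2.2.1, by simp [w.2.2.2.1],
      w.2.2.2.2.nodup_reduceOption_skeleton.length_le_card,
      w.2.2.2.2.countP_noneRuns_skeleton_le hG hD⟩)
  have hcode : Function.Injective code := by
    rintro ⟨a, b, l, hl, hw⟩ ⟨a', b', l', hl', hw'⟩ h
    simp only [code, Prod.mk.injEq, Subtype.mk.injEq] at h
    obtain ⟨rfl, hs⟩ := h
    obtain rfl := hw.eq_of_skeleton_eq hG hw' hs
    obtain rfl := hw.right_unique hw'
    rfl
  calc _ ≤ _ := Nat.card_le_card_of_injective code hcode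
    _ ≤ _ := by
      rw [Nat.card_prod, Nat.card_eq_fintype_card (α := V), mul_assoc]
      exact Nat.mul_le_mul_left _ (hK n)

end Skeleton

def pumpedWalk {D : ℕ} (C : Fin (D + 1) → List E) (seg : Fin D → List E) (a : Fin D → ℕ) :
    List E :=
  (List.ofFn fun i => (List.replicate (a i) (C i.castSucc)).flatten ++ seg i).flatten

section Pumping

variable {src tgt : E → V} {D : ℕ} {C : Fin (D + 1) → List E} {seg : Fin D → List E}

theorem isWalk_pumpedWalk {u : Fin (D + 1) → V} (hC : ∀ i, IsWalk src tgt (u i) (C i) (u i))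
    (hseg : ∀ i : Fin D, IsWalk src tgt (u i.castSucc) (seg i) (u i.succ)) (a : Fin D → ℕ) :
    IsWalk src tgt (u 0) (pumpedWalk C seg a) (u (Fin.last D)) :=
  isWalk_flatten_ofFn fun i => ((hC _).flatten_replicate _).append (hseg i)

theorem length_pumpedWalk (a : Fin D → ℕ) :
    (pumpedWalk C seg a).length = ∑ i, a i * (C i.castSucc).length + ∑ i, (seg i).length := by
  simp [pumpedWalk, List.length_flatten, List.sum_ofFn, Finset.sum_add_distrib]

theorem countP_pumpedWalk [DecidableEq E] (hC : ∀ i j, i ≠ j → ∀ e ∈ C i, e ∉ C j)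
    (a : Fin D → ℕ) (j : Fin D) :
    (pumpedWalk C seg a).countP (· ∈ C j.castSucc) =
      a j * (C j.castSucc).length + ∑ i, (seg i).countP (· ∈ C j.castSucc) := by
  simp only [pumpedWalk, List.countP_flatten, List.map_ofFn, List.sum_ofFn,
    Function.comp_apply, List.countP_append, List.map_replicate, List.sum_replicate,
    smul_eq_mul, Finset.sum_add_distrib]
  congr 1
  rw [Finset.sum_eq_single j (fun i _ hij => ?_) (by simp), List.countP_eq_length.2 (by simp)]
  rw [List.countP_eq_zero.2 fun e he => by
    simpa using hC _ _ (Fin.castSucc_injective _ |>.ne hij) e he, mul_zero]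

theorem exists_card_walkOfLength_ge [Finite V] [Finite E] (hC : IsDisjointCycleChain src tgt C) :
    ∃ T B : ℕ, ∀ M n, T * M + B ≤ n → (M + 1) ^ D ≤ Nat.card (WalkOfLength src tgt n) := by
  classical
  obtain ⟨hcyc, hdisj, hreach⟩ := hC
  choose u hu hwalk using fun i => (hcyc i).exists_isWalk
  choose seg hseg using fun i : Fin D =>
    (hreach i).exists_isWalk (hwalk _) (hwalk _) (hu i.castSucc) (hu i.succ)
  have hedge : ∀ i j, i ≠ j → ∀ e ∈ C i, e ∉ C j := fun i j hij e hi hj =>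
    hdisj i j hij (src e) ⟨List.mem_map_of_mem hi, List.mem_map_of_mem hj⟩
  choose pad w hpad_len hpad_walk hpad_mem using
    (hwalk (Fin.last D)).exists_length_eq (isSimpleCycle_iff.1 (hcyc _)).1
  refine ⟨∑ i : Fin D, (C i.castSucc).length, ∑ i, (seg i).length, fun M n hn => ?_⟩
  have hlen (a : Fin D → Fin (M + 1)) : (pumpedWalk C seg (a ·)).length ≤ n := by
    rw [length_pumpedWalk]
    calc _ ≤ ∑ i : Fin D, (C i.castSucc).length * M + ∑ i, (seg i).length :=
          Nat.add_le_add_right (Finset.sum_le_sum fun i _ => by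
            rw [mul_comm]; exact Nat.mul_le_mul_left _ (Nat.lt_succ_iff.1 (a i).2)) _
      _ ≤ n := by rwa [← Finset.sum_mul]
  -- the padding stays on the last cycle, so it adds nothing to the counts on the others
  let walk (a : Fin D → Fin (M + 1)) : WalkOfLength src tgt n :=
    ⟨u 0, _, pumpedWalk C seg (a ·) ++ pad (n - (pumpedWalk C seg (a ·)).length),
      by simp [hpad_len, Nat.add_sub_cancel' (hlen a)],
      (isWalk_pumpedWalk hwalk hseg _).append (hpad_walk _)⟩
  have hinj : Function.Injective walk := by
    intro a a' h
    funext j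
    have hcount := congrArg (fun w => w.2.2.1.countP (· ∈ C j.castSucc)) h
    have hpad (k : ℕ) : (pad k).countP (· ∈ C j.castSucc) = 0 := List.countP_eq_zero.2
      fun e he => by simpa using hedge _ _ (Fin.castSucc_lt_last j).ne' e (hpad_mem k e he)
    simp only [walk, List.countP_append, countP_pumpedWalk hedge, hpad, add_zero,
      add_left_inj] at hcount
    exact Fin.ext (Nat.eq_of_mul_eq_mul_right
      (List.length_pos_iff.2 (isSimpleCycle_iff.1 (hcyc _)).1) hcount)
  simpa using Nat.card_le_card_of_injective walk hinj

end Pumping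

def walkConsEquiv (src tgt : E → V) (a b : V) (n : ℕ) :
    {l : List E // l.length = n + 1 ∧ IsWalk src tgt a l b} ≃
      Σ c : V, {e : E // src e = a ∧ tgt e = c} ×
        {l : List E // l.length = n ∧ IsWalk src tgt c l b} where
  toFun
    | ⟨e :: l, hl, he, hw⟩ => ⟨tgt e, ⟨e, he, rfl⟩, ⟨l, Nat.succ.inj hl, hw⟩⟩
  invFun
    | ⟨_, ⟨e, he, rfl⟩, ⟨l, hl, hw⟩⟩ => ⟨e :: l, by simp [hl], he, hw⟩
  left_inv
    | ⟨_ :: _, _, _, _⟩ => rfl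
  right_inv
    | ⟨_, ⟨_, _, rfl⟩, ⟨_, _, _⟩⟩ => rfl

section AdjMatrix

variable {src tgt : E → V}

theorem adjMatrix_pow_apply [Fintype V] [DecidableEq V] [Finite E] (n : ℕ) (a b : V) :
    (adjMatrix src tgt ^ n) a b =
      Nat.card {l : List E // l.length = n ∧ IsWalk src tgt a l b} := by
  induction n generalizing a with
  | zero =>
    rw [pow_zero, Matrix.one_apply]
    by_cases hab : a = b
    · subst hab
      rw [if_pos rfl, Nat.card_eq_one_iff_exists.2
        ⟨⟨[], rfl, rfl⟩, fun l => Subtype.ext (List.length_eq_zero_iff.1 l.2.1)⟩, Nat.cast_one]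
    · have : IsEmpty {l : List E // l.length = 0 ∧ IsWalk src tgt a l b} :=
        ⟨fun ⟨l, hl, hw⟩ => hab (by rwa [List.length_eq_zero_iff.1 hl] at hw)⟩
      rw [if_neg hab, Nat.card_of_isEmpty, Nat.cast_zero]
  | succ n ih =>
    rw [pow_succ', Matrix.mul_apply, Nat.card_congr (walkConsEquiv src tgt a b n),
      Nat.card_sigma, Nat.cast_sum]
    simp only [Nat.card_prod, Nat.cast_mul, ih]
    rfl

theorem sum_sum_abs_adjMatrix_pow [Fintype V] [DecidableEq V] [Finite E] (n : ℕ) :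
    ∑ a : V, ∑ b : V, |(adjMatrix src tgt ^ n) a b| = Nat.card (WalkOfLength src tgt n) := by
  simp only [adjMatrix_pow_apply, Nat.abs_cast, Nat.card_sigma, Nat.cast_sum]

end AdjMatrix

theorem exists_two_sided_pow_bounds {f : ℕ → ℕ} {D K T B : ℕ}
    (hup : ∀ n, f n ≤ K * (n + 1) ^ D) (hlow : ∀ M n, T * M + B ≤ n → (M + 1) ^ D ≤ f n) :
    ∃ c₁ c₂ : ℝ, 0 < c₁ ∧ c₁ ≤ c₂ ∧ ∃ N : ℕ, ∀ n ≥ N,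
      c₁ * (n : ℝ) ^ D ≤ f n ∧ (f n : ℝ) ≤ c₂ * (n : ℝ) ^ D := by
  have hlow' (n : ℕ) (hn : 2 * B ≤ n) : n ^ D ≤ (2 * (T + 1)) ^ D * f n := by
    obtain ⟨m, rfl⟩ : ∃ m, n = m + B := ⟨n - B, by omega⟩
    set M := m / (T + 1)
    have hM : M * (T + 1) ≤ m := Nat.div_mul_le_self _ _
    have hM' : m < (T + 1) * (M + 1) := Nat.lt_mul_div_succ _ (Nat.succ_pos T)
    calc (m + B) ^ D ≤ (2 * (T + 1) * (M + 1)) ^ D := Nat.pow_le_pow_left (by nlinarith) D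
      _ = (2 * (T + 1)) ^ D * (M + 1) ^ D := mul_pow ..
      _ ≤ _ := Nat.mul_le_mul_left _ (hlow M _ (by nlinarith))
  have hup' (n : ℕ) (hn : 1 ≤ n) : f n ≤ K * 2 ^ D * n ^ D := by
    rw [mul_assoc, ← mul_pow]
    exact (hup n).trans (Nat.mul_le_mul_left _ (Nat.pow_le_pow_left (by omega) D))
  refine ⟨(((2 * (T + 1)) ^ D : ℕ) : ℝ)⁻¹, max (((2 * (T + 1)) ^ D : ℕ) : ℝ)⁻¹ (K * 2 ^ D),
    by positivity, le_max_left _ _, 2 * B + 1, fun n hn => ⟨?_, ?_⟩⟩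
  · rw [inv_mul_le_iff₀ (by positivity)]
    exact_mod_cast hlow' n (by omega)
  · calc (f n : ℝ) ≤ K * 2 ^ D * n ^ D := by exact_mod_cast hup' n (by omega)
      _ ≤ _ := by gcongr; exact le_max_right _ _

theorem adjMatrix_pow_norm_poly_growth_general [Fintype V] [DecidableEq V] [Fintype E]
    (src tgt : E → V)
    (hG : NoIntersectingCycles src tgt)
    (D : ℕ)
    (hD : IsGreatest {k : ℕ | ∃ C : Fin (k + 1) → List E,
      (∀ i, IsSimpleCycle src tgt (C i)) ∧
      (∀ i j, i ≠ j → CyclesDisjoint src (C i) (C j)) ∧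
      (∀ i : Fin k, CycleReachesCycle src tgt (C i.castSucc) (C i.succ))} D) :
    ∃ c₁ c₂ : ℝ, 0 < c₁ ∧ c₁ ≤ c₂ ∧ ∃ N : ℕ, ∀ n ≥ N,
      c₁ * (n : ℝ) ^ D ≤ (∑ a : V, ∑ b : V, |((adjMatrix src tgt) ^ n) a b|) ∧
      (∑ a : V, ∑ b : V, |((adjMatrix src tgt) ^ n) a b|) ≤ c₂ * (n : ℝ) ^ D := by
  obtain ⟨C, hC⟩ := hD.1
  obtain ⟨K, hup⟩ := exists_card_walkOfLength_le hG hD.2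
  obtain ⟨T, B, hlow⟩ := exists_card_walkOfLength_ge hC
  simp only [sum_sum_abs_adjMatrix_pow]
  exact exists_two_sided_pow_bounds hup hlow

/-- Let `G` be a finite directed multigraph with no intersecting
cycles in which every vertex has at least one outgoing edge, let `A` be its adjacency
matrix with `‖A‖ = ∑_{a,b} |A_{a,b}|`, and let `D` be the largest `k` admitting a chain
`C₀ ≥ C₁ ≥ ⋯ ≥ C_k` of pairwise vertex-disjoint simple cycles. Then
`‖A ^ n‖ ≍ n ^ D`. -/
theorem adjMatrix_pow_norm_poly_growth [Fintype V] [DecidableEq V] [Fintype E]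
    (src tgt : E → V)
    (hG : NoIntersectingCycles src tgt)
    (hout : ∀ v : V, ∃ e : E, src e = v)
    (D : ℕ)
    (hD : IsGreatest {k : ℕ | ∃ C : Fin (k + 1) → List E,
      (∀ i, IsSimpleCycle src tgt (C i)) ∧
      (∀ i j, i ≠ j → CyclesDisjoint src (C i) (C j)) ∧
      (∀ i : Fin k, CycleReachesCycle src tgt (C i.castSucc) (C i.succ))} D) :
    ∃ c₁ c₂ : ℝ, 0 < c₁ ∧ c₁ ≤ c₂ ∧ ∃ N : ℕ, ∀ n ≥ N,
      c₁ * (n : ℝ) ^ D ≤ (∑ a : V, ∑ b : V, |((adjMatrix src tgt) ^ n) a b|) ∧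
      (∑ a : V, ∑ b : V, |((adjMatrix src tgt) ^ n) a b|) ≤ c₂ * (n : ℝ) ^ D :=
  adjMatrix_pow_norm_poly_growth_general src tgt hG D hD
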